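/- Let u be a utility function assigning a nonnegative real u(S,E) to each subset S of projects and budgeting scenario E, satisfying u(∅,E)=0 and cost consistency (for every E there is k>0 with u({a},E)=k·c(a) for all projects a). Consider E=(A,V,c,l) with A={a,b}, c(a)=c(b)=2, l=2, and 7 voters: 4 voters whose approval set is {b} and 3 voters whose approval set is {a}. Then {b} is the unique feasible bundle maximizing Σ_{i∈V} u(A_i ∩ B, E); and in E'=(A,V,c',l) with c'(b)=c(b)−1=1 and c'(a)=2, the unique feasible bundle maximizing Σ_{i∈V} u(A_i ∩ B, E') is {a}, which does not contain b. Consequently, every budgeting method that always returns a sum-optimal feasible bundle (with respect to u) violates discount monotonicity. -/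
import Mathlib


open Finset

/-- A participatory budgeting scenario `E = (A, V, c, l)`. -/
structure Scenario (α ι : Type*) [DecidableEq α] where
  projects : Finset α
  voters : Finset ι
  voters_nonempty : voters.Nonempty
  cost : α → ℕ
  budget : ℕ
  approval : ι → Finset α
  approval_subset : ∀ i ∈ voters, approval i ⊆ projects
  approval_feasible : ∀ i ∈ voters, ∑ a ∈ approval i, cost a ≤ budget

variable {α ι : Type*} [DecidableEq α]

/-- A bundle is feasible if it consists of projects and fits in the budget. -/
def Feasible (E : Scenario α ι) (B : Finset α) : Prop :=
  B ⊆ E.projects ∧ ∑ a ∈ B, E.cost a ≤ E.budget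

/-- The sum over all voters of the satisfaction `u (Aᵢ ∩ B)`. -/
noncomputable def sumScore (E : Scenario α ι) (u : Finset α → ℝ) (B : Finset α) : ℝ :=
  ∑ i ∈ E.voters, u (E.approval i ∩ B)

/-- A feasible bundle maximizing the sum of voters' satisfactions. -/
def IsSumOptimal (E : Scenario α ι) (u : Finset α → ℝ) (B : Finset α) : Prop :=
  Feasible E B ∧ ∀ C, Feasible E C → sumScore E u C ≤ sumScore E u B

/-- A budgeting method `r` satisfies discount monotonicity if any funded project remains
funded when its cost is decreased by `1`, everything else being unchanged. -/
def DiscountMonotone (r : Scenario α ι → Finset α) : Prop :=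
  ∀ E E' : Scenario α ι, ∀ b ∈ r E,
    E'.projects = E.projects → E'.voters = E.voters → E'.budget = E.budget →
    E'.approval = E.approval →
    E'.cost b + 1 = E.cost b → (∀ a, a ≠ b → E'.cost a = E.cost a) →
    b ∈ r E'

/-- The scenario `E`: projects `a = 0` and `b = 1`, both of cost `2`, budget `2`;
4 voters approve `{b}` and 3 voters approve `{a}`. -/
def Edisc : Scenario (Fin 2) (Fin 7) where
  projects := {0, 1}
  voters := Finset.univ
  voters_nonempty := ⟨0, Finset.mem_univ 0⟩
  cost := fun _ => 2
  budget := 2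
  approval := fun i => if (i : ℕ) < 4 then {1} else {0}
  approval_subset := by decide
  approval_feasible := by decide

/-- The scenario `E'`: as `E`, but the cost of `b = 1` is decreased from `2` to `1`. -/
def Edisc' : Scenario (Fin 2) (Fin 7) where
  projects := {0, 1}
  voters := Finset.univ
  voters_nonempty := ⟨0, Finset.mem_univ 0⟩
  cost := ![2, 1]
  budget := 2
  approval := fun i => if (i : ℕ) < 4 then {1} else {0}
  approval_subset := by decide
  approval_feasible := by decide

/-- For any utility function with `u(∅,E) = 0`, nonnegativity and cost consistency:
`{b}` is the unique sum-optimal bundle of `E`; `{a}` is the unique sum-optimal bundle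
of `E'` (which does not contain `b`); hence every budgeting method that always returns
a sum-optimal feasible bundle violates discount monotonicity. -/
theorem sum_rule_violates_discount_monotonicity
    (u : Scenario (Fin 2) (Fin 7) → Finset (Fin 2) → ℝ)
    (hzero : ∀ E, u E ∅ = 0)
    (hnonneg : ∀ E S, 0 ≤ u E S)
    (hcc : ∀ E : Scenario (Fin 2) (Fin 7),
      ∃ k : ℝ, 0 < k ∧ ∀ a ∈ E.projects, u E {a} = k * E.cost a) :
    (IsSumOptimal Edisc (u Edisc) {1} ∧
      ∀ B, IsSumOptimal Edisc (u Edisc) B → B = {1}) ∧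
    (IsSumOptimal Edisc' (u Edisc') {0} ∧
      (∀ B, IsSumOptimal Edisc' (u Edisc') B → B = {0}) ∧
      (∀ B, IsSumOptimal Edisc' (u Edisc') B → (1 : Fin 2) ∉ B)) ∧
    (∀ r : Scenario (Fin 2) (Fin 7) → Finset (Fin 2),
      (∀ F, IsSumOptimal F (u F) (r F)) → ¬ DiscountMonotone r) := by
  -- enumeration of all bundles
  have enum : ∀ B : Finset (Fin 2), B = ∅ ∨ B = {0} ∨ B = {1} ∨ B = {0,1} := by decide
  -- score formulas
  have score : ∀ B, sumScore Edisc (u Edisc) B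
      = 4 * u Edisc ({1} ∩ B) + 3 * u Edisc ({0} ∩ B) := by
    intro B; simp [sumScore, Edisc, Fin.sum_univ_succ]; ring
  have score' : ∀ B, sumScore Edisc' (u Edisc') B
      = 4 * u Edisc' ({1} ∩ B) + 3 * u Edisc' ({0} ∩ B) := by
    intro B; simp [sumScore, Edisc', Fin.sum_univ_succ]; ring
  obtain ⟨k, hk, hku⟩ := hcc Edisc
  obtain ⟨k', hk', hku'⟩ := hcc Edisc'
  have u0 : u Edisc {0} = 2 * k := by
    have := hku 0 (by decide); rw [this]; norm_num [Edisc]; ring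
  have u1 : u Edisc {1} = 2 * k := by
    have := hku 1 (by decide); rw [this]; norm_num [Edisc]; ring
  have u0' : u Edisc' {0} = 2 * k' := by
    have := hku' 0 (by decide); rw [this]; norm_num [Edisc']; ring
  have u1' : u Edisc' {1} = k' := by
    have := hku' 1 (by decide); rw [this]; norm_num [Edisc']
  have i00 : ({0} : Finset (Fin 2)) ∩ {0} = {0} := by decide
  have i10 : ({1} : Finset (Fin 2)) ∩ {0} = ∅ := by decide
  have i01 : ({0} : Finset (Fin 2)) ∩ {1} = ∅ := by decide
  have i11 : ({1} : Finset (Fin 2)) ∩ {1} = {1} := by decide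
  have ie0 : ({0} : Finset (Fin 2)) ∩ ∅ = ∅ := by decide
  have ie1 : ({1} : Finset (Fin 2)) ∩ ∅ = ∅ := by decide
  have sE : sumScore Edisc (u Edisc) ∅ = 0 := by
    rw [score]; rw [ie0, ie1, hzero]; ring
  have s0 : sumScore Edisc (u Edisc) {0} = 6 * k := by
    rw [score]; rw [i00, i10, hzero, u0]; ring
  have s1 : sumScore Edisc (u Edisc) {1} = 8 * k := by
    rw [score]; rw [i01, i11, hzero, u1]; ring
  have sE' : sumScore Edisc' (u Edisc') ∅ = 0 := by
    rw [score']; rw [ie0, ie1, hzero]; ring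
  have s0' : sumScore Edisc' (u Edisc') {0} = 6 * k' := by
    rw [score']; rw [i00, i10, hzero, u0']; ring
  have s1' : sumScore Edisc' (u Edisc') {1} = 4 * k' := by
    rw [score']; rw [i01, i11, hzero, u1']; ring
  have nf01 : ¬ Feasible Edisc {0,1} := by unfold Feasible; decide
  have nf01' : ¬ Feasible Edisc' {0,1} := by unfold Feasible; decide
  have f1 : Feasible Edisc {1} := by unfold Feasible; decide
  have f0 : Feasible Edisc {0} := by unfold Feasible; decide
  have f0' : Feasible Edisc' {0} := by unfold Feasible; decide
  have f1' : Feasible Edisc' {1} := by unfold Feasible; decide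
  -- optimality in E
  have opt1 : IsSumOptimal Edisc (u Edisc) {1} := by
    refine ⟨f1, fun C hC => ?_⟩
    rcases enum C with h | h | h | h <;> subst h
    · rw [sE, s1]; positivity
    · rw [s0, s1]; linarith
    · exact le_refl _
    · exact absurd hC nf01
  have uniq1 : ∀ B, IsSumOptimal Edisc (u Edisc) B → B = {1} := by
    intro B hB
    rcases enum B with h | h | h | h <;> subst h
    · have := hB.2 {1} f1; rw [sE, s1] at this; linarith
    · have := hB.2 {1} f1; rw [s0, s1] at this; linarith
    · rfl
    · exact absurd hB.1 nf01
  have opt0' : IsSumOptimal Edisc' (u Edisc') {0} := by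
    refine ⟨f0', fun C hC => ?_⟩
    rcases enum C with h | h | h | h <;> subst h
    · rw [sE', s0']; positivity
    · exact le_refl _
    · rw [s1', s0']; linarith
    · exact absurd hC nf01'
  have uniq0' : ∀ B, IsSumOptimal Edisc' (u Edisc') B → B = {0} := by
    intro B hB
    rcases enum B with h | h | h | h <;> subst h
    · have := hB.2 {0} f0'; rw [sE', s0'] at this; linarith
    · rfl
    · have := hB.2 {0} f0'; rw [s1', s0'] at this; linarith
    · exact absurd hB.1 nf01'
  refine ⟨⟨opt1, uniq1⟩, ⟨opt0', uniq0', ?_⟩, ?_⟩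
  · intro B hB; rw [uniq0' B hB]; decide
  · intro r hr hmono
    have hE : r Edisc = {1} := uniq1 _ (hr Edisc)
    have hb : (1 : Fin 2) ∈ r Edisc := by rw [hE]; decide
    have := hmono Edisc Edisc' 1 hb rfl rfl rfl rfl (by decide) (by decide)
    rw [uniq0' _ (hr Edisc')] at this
    exact absurd this (by decide)
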